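/- arXiv:2602.23573 — 2 statements merged into one kernel-verified Lean document; each statement's English description precedes it below -/
import Mathlib

section
/- The set S = {c ∈ ℝ : there exist an integer k ≥ 4 and a real a > 0 such that c is the unique global minimizer on (0, ∞) of g_{a,k}(x) = (a/x + 1/x^k)·e^x} is dense in the interval [1, ∞); that is, the closure of S contains [1, ∞). -/
/-!
For `x > 0` one computes `g_{a,k+1}'(x) = eˣ (a (x - 1) xᵏ + x - (k + 1)) / x^(k+2)`. Given `c > 1`
and `k + 1 > c`, the choice `a = (k + 1 - c) / ((c - 1) cᵏ) > 0` makes the numerator vanish at `c`;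
since `(x - 1) xᵏ` lies below its value at `c` on `(0, c)` and above it on `(c, ∞)`, the
numerator is negative on `(0, c)` and positive on `(c, ∞)`, so `c` is the strict global minimizer.
Thus every `c > 1` lies in `S`.
-/

/-- `g a k x = (a/x + 1/x^k) * e^x`, the leading constant of the expected runtime. -/
noncomputable def hpjG (a : ℝ) (k : ℕ) (x : ℝ) : ℝ := (a / x + 1 / x ^ k) * Real.exp x

open Real Set

lemma hasDerivAt_hpjG_succ (a : ℝ) (k : ℕ) {x : ℝ} (hx : x ≠ 0) :
    HasDerivAt (hpjG a (k + 1))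
      (exp x * ((a * (x - 1) * x ^ k + x - (k + 1)) / x ^ (k + 2))) x := by
  have h : HasDerivAt (hpjG a (k + 1)) _ x :=
    (((hasDerivAt_const x a).div (hasDerivAt_id' x) hx).add
      ((hasDerivAt_const x 1).div (hasDerivAt_pow (k + 1) x) (pow_ne_zero _ hx))).mul
      (hasDerivAt_exp x)
  convert h using 1
  simp only [Nat.add_sub_cancel, Pi.add_apply, Pi.div_apply]
  push_cast
  field_simp
  ring

lemma lt_apply_of_hasDerivAt_neg_of_pos {f f' : ℝ → ℝ} {b c : ℝ} (hbc : b < c)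
    (hf : ∀ x, b < x → HasDerivAt f (f' x) x)
    (hneg : ∀ x, b < x → x < c → f' x < 0) (hpos : ∀ x, c < x → 0 < f' x)
    {x : ℝ} (hx : b < x) (hxc : x ≠ c) : f c < f x := by
  have hcont : ContinuousOn f (Ioi b) := fun y hy => (hf y hy).continuousAt.continuousWithinAt
  rcases hxc.lt_or_gt with hlt | hgt
  · have hanti : StrictAntiOn f (Ioc b c) :=
      strictAntiOn_of_hasDerivWithinAt_neg (convex_Ioc b c) (hcont.mono Ioc_subset_Ioi_self)
        (fun y hy => (hf y (interior_subset hy).1).hasDerivWithinAt)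
        (fun y hy => by rw [interior_Ioc] at hy; exact hneg y hy.1 hy.2)
    exact hanti ⟨hx, hlt.le⟩ ⟨hbc, le_rfl⟩ hlt
  · have hmono : StrictMonoOn f (Ici c) :=
      strictMonoOn_of_hasDerivWithinAt_pos (convex_Ici c)
        (hcont.mono fun y hy => hbc.trans_le hy)
        (fun y (hy : y ∈ interior (Ici c)) =>
          (hf y (hbc.trans_le (interior_subset hy))).hasDerivWithinAt)
        (fun y hy => by rw [interior_Ici] at hy; exact hpos y hy)
    exact hmono self_mem_Ici hgt.le hgt

lemma sub_one_mul_pow_le_sub_one_mul_pow {x y : ℝ} (k : ℕ) (hx : 0 ≤ x) (hy : 1 ≤ y)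
    (hxy : x ≤ y) : (x - 1) * x ^ k ≤ (y - 1) * y ^ k := by
  rcases le_total x 1 with hx1 | hx1
  · calc (x - 1) * x ^ k ≤ 0 := mul_nonpos_of_nonpos_of_nonneg (by linarith) (by positivity)
      _ ≤ (y - 1) * y ^ k := mul_nonneg (by linarith) (by positivity)
  · exact mul_le_mul (by linarith) (pow_le_pow_left₀ hx hxy k) (by positivity) (by linarith)

lemma exists_pos_hpjG_lt {c : ℝ} (hc : 1 < c) {k : ℕ} (hk : c < k + 1) :
    ∃ a, 0 < a ∧ ∀ x, 0 < x → x ≠ c → hpjG a (k + 1) c < hpjG a (k + 1) x := by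
  have hden : 0 < (c - 1) * c ^ k := mul_pos (by linarith) (by positivity)
  set a := (k + 1 - c) / ((c - 1) * c ^ k)
  have ha : 0 < a := div_pos (by linarith) hden
  have hroot : a * ((c - 1) * c ^ k) = k + 1 - c := div_mul_cancel₀ _ hden.ne'
  refine ⟨a, ha, fun x hx hxc =>
    lt_apply_of_hasDerivAt_neg_of_pos (by linarith) (fun y hy => hasDerivAt_hpjG_succ a k hy.ne')
      (fun y hy hyc => ?_) (fun y hcy => ?_) hx hxc⟩
  · have hle := mul_le_mul_of_nonneg_left
      (sub_one_mul_pow_le_sub_one_mul_pow k hy.le hc.le hyc.le) ha.le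
    exact mul_neg_of_pos_of_neg (exp_pos y) (div_neg_of_neg_of_pos (by linarith) (by positivity))
  · have hle := mul_le_mul_of_nonneg_left
      (sub_one_mul_pow_le_sub_one_mul_pow k (by linarith) (hc.trans hcy).le hcy.le) ha.le
    have hy : 0 < y := by linarith
    exact mul_pos (exp_pos y) (div_pos (by linarith) (by positivity))

theorem stmt1 :
    Set.Ici (1 : ℝ) ⊆ closure {c : ℝ | ∃ k : ℕ, 4 ≤ k ∧ ∃ a : ℝ, 0 < a ∧
      (∀ x : ℝ, 0 < x → hpjG a k c ≤ hpjG a k x) ∧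
      (∀ x : ℝ, 0 < x → hpjG a k x = hpjG a k c → x = c)} := by
  rw [← closure_Ioi]
  refine closure_mono fun c (hc : 1 < c) => ?_
  obtain ⟨n, hn⟩ := exists_nat_gt c
  obtain ⟨a, ha, hmin⟩ := exists_pos_hpjG_lt hc (k := n + 3) (by push_cast; linarith)
  refine ⟨n + 3 + 1, by omega, a, ha, fun x hx => ?_, fun x hx heq => ?_⟩
  · rcases eq_or_ne x c with rfl | hxc
    · exact le_rfl
    · exact (hmin x hx hxc).le
  · by_contra hxc
    exact (hmin x hx hxc).ne' heq
end

section
/- Let k ≥ 2 be an integer, and let Z : (0, ∞) → ℝ be any function such that for every a > 0, Z(a) > 1 and q_{a,k}(Z(a)) = 0, where q_{a,k}(x) = a·x^k − a·x^{k−1} + x − k. Then Z is continuous on (0, ∞). -/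
/-- `q a k x = a*x^k - a*x^(k-1) + x - k`. -/
def hpjQ (a : ℝ) (k : ℕ) (x : ℝ) : ℝ := a * x ^ k - a * x ^ (k - 1) + x - k

/-! For `x > 1`, the equation `q_{a,k}(x) = 0` can be solved for the coefficient:
`a = (k - x) / (x^(k-1) (x - 1))`. On `(1, k]` this coefficient is a strictly decreasing function
of the root, so `Z` is its inverse: a strictly decreasing map of `(0, ∞)` onto the open interval
`(1, k)`. A strictly monotone function with open image on an open set is continuous. -/

open Set

theorem StrictAntiOn.continuousOn_of_isOpen_image {α β : Type*} [LinearOrder α]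
    [TopologicalSpace α] [OrderTopology α] [LinearOrder β] [TopologicalSpace β] [OrderTopology β]
    [DenselyOrdered β] {f : α → β} {s : Set α} (hf : StrictAntiOn f s) (hs : IsOpen s)
    (hfs : IsOpen (f '' s)) : ContinuousOn f s := fun _ ha =>
  (hf.dual_right.continuousAt_of_image_mem_nhds (hs.mem_nhds ha)
    (hfs.mem_nhds (mem_image_of_mem f ha))).continuousWithinAt

theorem pow_mul_sub_one_strictMonoOn (n : ℕ) :
    StrictMonoOn (fun x : ℝ => x ^ n * (x - 1)) (Ici 1) := by
  intro x (hx : 1 ≤ x) y (hy : 1 ≤ y) hxy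
  calc x ^ n * (x - 1) ≤ y ^ n * (x - 1) := by gcongr
    _ < y ^ n * (y - 1) := by gcongr

theorem hpjQ_eq_zero_iff {a x : ℝ} {k : ℕ} (hk : 1 ≤ k) :
    hpjQ a k x = 0 ↔ a * (x ^ (k - 1) * (x - 1)) = k - x := by
  have hpow : x ^ k = x ^ (k - 1) * x := by rw [← pow_succ, Nat.sub_add_cancel hk]
  rw [hpjQ, hpow]
  constructor <;> intro h <;> linarith

noncomputable def rootCoeff (k : ℕ) (x : ℝ) : ℝ := (k - x) / (x ^ (k - 1) * (x - 1))

theorem rootCoeff_eq_of_hpjQ_eq_zero {a x : ℝ} {k : ℕ} (hk : 1 ≤ k) (hx : 1 < x)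
    (h : hpjQ a k x = 0) : rootCoeff k x = a := by
  have hpos : 0 < x ^ (k - 1) * (x - 1) := by
    have : 0 < x - 1 := by linarith
    positivity
  rw [rootCoeff, ← (hpjQ_eq_zero_iff hk).1 h, mul_div_cancel_right₀ _ hpos.ne']

theorem rootCoeff_pos {k : ℕ} {x : ℝ} (hx : x ∈ Ioo 1 (k : ℝ)) : 0 < rootCoeff k x := by
  have hx1 : 0 < x - 1 := by linarith [hx.1]
  have hxk : 0 < k - x := by linarith [hx.2]
  exact div_pos hxk (mul_pos (pow_pos (by linarith) _) hx1)

theorem rootCoeff_strictAntiOn (k : ℕ) : StrictAntiOn (rootCoeff k) (Ioc 1 k) := by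
  intro x ⟨hx1, _⟩ y ⟨hy1, hyk⟩ hxy
  have hfx : 0 < x ^ (k - 1) * (x - 1) := by
    have : 0 < x - 1 := by linarith
    positivity
  have hfxy : x ^ (k - 1) * (x - 1) < y ^ (k - 1) * (y - 1) :=
    pow_mul_sub_one_strictMonoOn (k - 1) hx1.le hy1.le hxy
  calc (k - y) / (y ^ (k - 1) * (y - 1)) ≤ (k - y) / (x ^ (k - 1) * (x - 1)) := by
        gcongr
    _ < (k - x) / (x ^ (k - 1) * (x - 1)) := by gcongr

theorem lt_of_hpjQ_eq_zero {a x : ℝ} {k : ℕ} (ha : 0 < a) (hk : 1 ≤ k) (hx : 1 < x)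
    (h : hpjQ a k x = 0) : x < k := by
  have : 0 < x - 1 := by linarith
  have : 0 < a * (x ^ (k - 1) * (x - 1)) := by positivity
  linarith [(hpjQ_eq_zero_iff hk).1 h]

theorem stmt10 (k : ℕ) (hk : 2 ≤ k) (Z : ℝ → ℝ)
    (hZ : ∀ a : ℝ, 0 < a → 1 < Z a ∧ hpjQ a k (Z a) = 0) :
    ContinuousOn Z (Set.Ioi 0) := by
  have hk1 : 1 ≤ k := by omega
  have hZ_mem (a : ℝ) (ha : 0 < a) : Z a ∈ Ioo 1 (k : ℝ) :=
    ⟨(hZ a ha).1, lt_of_hpjQ_eq_zero ha hk1 (hZ a ha).1 (hZ a ha).2⟩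
  have hZ_inv (a : ℝ) (ha : 0 < a) : rootCoeff k (Z a) = a :=
    rootCoeff_eq_of_hpjQ_eq_zero hk1 (hZ a ha).1 (hZ a ha).2
  have hanti := rootCoeff_strictAntiOn k
  have hZ_anti : StrictAntiOn Z (Ioi 0) := fun a ha b hb hab => by
    rwa [← hanti.lt_iff_gt (Ioo_subset_Ioc_self (hZ_mem a ha)) (Ioo_subset_Ioc_self (hZ_mem b hb)),
      hZ_inv a ha, hZ_inv b hb]
  have hZ_image : Z '' Ioi 0 = Ioo 1 (k : ℝ) := by
    refine Subset.antisymm (image_subset_iff.2 hZ_mem) fun x hx => ?_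
    have ha := rootCoeff_pos hx
    exact ⟨rootCoeff k x, ha,
      hanti.injOn (Ioo_subset_Ioc_self (hZ_mem _ ha)) (Ioo_subset_Ioc_self hx) (hZ_inv _ ha)⟩
  exact hZ_anti.continuousOn_of_isOpen_image isOpen_Ioi (hZ_image ▸ isOpen_Ioo)
end
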